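/- Assume the step ratios satisfy 0 < r_k < (3+√17)/2 for 2 ≤ k ≤ N. Then for every 1 ≤ j ≤ n ≤ N, the DOC kernel θ_{n−j}^{(n)} is positive and admits the explicit representation θ_{n−j}^{(n)} = (1/b_0^{(j)}) · Π_{i=j+1}^{n} r_i²/(1+2r_i). -/

import Mathlib

open Finset

/-!
Since `b_j^{(n)} = 0` for `j ≥ 2`, the defining recurrence of the DOC kernels has a single term:
`θ_{n-j}^{(n)} = -(b_1^{(j+1)} / b_0^{(j)}) θ_{n-j-1}^{(n)}`. Writing
`b_1^{(j+1)} = -(r_{j+1}² / (1 + 2 r_{j+1})) b_0^{(j+1)}`, the recurrence telescopes to the product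
formula, and every factor is positive as soon as the step ratios are.
-/

/-- BDF2 kernels `b_j^{(n)}` (assuming `r 1 = 0`, so the `n = 1` case
`b_0^{(1)} = 1/τ_1` is subsumed by the general formula). -/
noncomputable def bk (τ r : ℕ → ℝ) (n j : ℕ) : ℝ :=
  if j = 0 then (1 + 2 * r n) / (τ n * (1 + r n))
  else if j = 1 then -(r n) ^ 2 / (τ n * (1 + r n))
  else 0

/-- DOC kernels: `th τ r n m = θ_m^{(n)}`, i.e. `θ_{n-k}^{(n)}` with `m = n - k`. -/
noncomputable def th (τ r : ℕ → ℝ) (n : ℕ) : ℕ → ℝ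
  | 0 => 1 / bk τ r n 0
  | m + 1 => -(1 / bk τ r (n - (m + 1)) 0) *
      ∑ i ∈ (Finset.range (m + 1)).attach,
        th τ r n i.1 * bk τ r (n - i.1) (m + 1 - i.1)
  decreasing_by exact Finset.mem_range.mp i.2

section

variable (τ r : ℕ → ℝ)

lemma bk_of_two_le (n : ℕ) {j : ℕ} (hj : 2 ≤ j) : bk τ r n j = 0 := by
  rw [bk, if_neg (by omega), if_neg (by omega)]

lemma bk_zero_pos {k : ℕ} (hτ : 0 < τ k) (hr : 0 ≤ r k) : 0 < bk τ r k 0 := by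
  rw [bk, if_pos rfl]
  positivity

lemma neg_bk_one_div_bk_zero {k : ℕ} (hk : τ k * (1 + r k) ≠ 0) :
    -(bk τ r k 1 / bk τ r k 0) = r k ^ 2 / (1 + 2 * r k) := by
  simp only [bk, one_ne_zero, if_false, if_true]
  rw [div_div_div_cancel_right₀ hk, neg_div, neg_neg]

lemma th_succ (n m : ℕ) :
    th τ r n (m + 1) = -(1 / bk τ r (n - (m + 1)) 0) * (th τ r n m * bk τ r (n - m) 1) := by
  rw [th, sum_attach (range (m + 1)) fun i => th τ r n i * bk τ r (n - i) (m + 1 - i),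
    sum_eq_single_of_mem m (self_mem_range_succ m)]
  · rw [Nat.add_sub_cancel_left]
  · intro i hi him
    rw [bk_of_two_le τ r _ (by have := mem_range.mp hi; omega), mul_zero]

lemma th_sub_eq_prod {n j : ℕ} (hjn : j ≤ n)
    (h : ∀ k, j < k → k ≤ n → τ k * (1 + r k) ≠ 0) :
    th τ r n (n - j) = 1 / bk τ r j 0 * ∏ i ∈ Icc (j + 1) n, r i ^ 2 / (1 + 2 * r i) := by
  induction hjn using Nat.decreasingInduction with
  | self => rw [Nat.sub_self, th, Icc_eq_empty (by omega), prod_empty, mul_one]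
  | of_succ j hj ih =>
    have hsucc : n - j = n - (j + 1) + 1 := by omega
    have hprod : ∏ i ∈ Icc (j + 1) n, r i ^ 2 / (1 + 2 * r i) =
        r (j + 1) ^ 2 / (1 + 2 * r (j + 1)) * ∏ i ∈ Icc (j + 2) n, r i ^ 2 / (1 + 2 * r i) := by
      rw [← Ico_add_one_right_eq_Icc, ← Ico_add_one_right_eq_Icc,
        prod_eq_prod_Ico_succ_bot (by omega)]
    rw [hsucc, th_succ, ← hsucc, Nat.sub_sub_self hj.le, Nat.sub_sub_self (by omega),
      ih fun k hk hkn => h k (by omega) hkn, hprod,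
      ← neg_bk_one_div_bk_zero τ r (h (j + 1) (by omega) hj)]
    ring

end

theorem stmt4_general (N : ℕ) (τ r : ℕ → ℝ)
    (hτ : ∀ k, 1 ≤ k → k ≤ N → 0 < τ k)
    (hr1 : r 1 = 0)
    (hratio : ∀ k, 2 ≤ k → k ≤ N → 0 < r k ∧ r k < (3 + Real.sqrt 17) / 2)
    (n j : ℕ) (hj1 : 1 ≤ j) (hjn : j ≤ n) (hnN : n ≤ N) :
    0 < th τ r n (n - j) ∧
      th τ r n (n - j) =
        (1 / bk τ r j 0) * ∏ i ∈ Finset.Icc (j + 1) n, (r i) ^ 2 / (1 + 2 * r i) := by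
  have hr_pos : ∀ k, j < k → k ≤ n → 0 < r k := fun k hjk hkn => (hratio k (by omega) (by omega)).1
  have hformula := th_sub_eq_prod τ r hjn fun k hjk hkn =>
    (mul_pos (hτ k (by omega) (by omega)) (by linarith [hr_pos k hjk hkn])).ne'
  refine ⟨?_, hformula⟩
  have hr_j : 0 ≤ r j := by
    rcases hj1.eq_or_lt with rfl | hj
    · exact hr1.ge
    · exact (hratio j hj (by omega)).1.le
  have hprod : 0 < ∏ i ∈ Icc (j + 1) n, r i ^ 2 / (1 + 2 * r i) := by
    refine prod_pos fun i hi => ?_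
    have := hr_pos i (by grind) (mem_Icc.mp hi).2
    positivity
  rw [hformula]
  have := bk_zero_pos τ r (hτ j hj1 (by omega)) hr_j
  positivity

theorem stmt4 (N : ℕ) (τ r : ℕ → ℝ)
    (hτ : ∀ k, 1 ≤ k → k ≤ N → 0 < τ k)
    (hr1 : r 1 = 0)
    (hr : ∀ k, 2 ≤ k → k ≤ N → r k = τ k / τ (k - 1))
    (hratio : ∀ k, 2 ≤ k → k ≤ N → 0 < r k ∧ r k < (3 + Real.sqrt 17) / 2)
    (n j : ℕ) (hj1 : 1 ≤ j) (hjn : j ≤ n) (hnN : n ≤ N) :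
    0 < th τ r n (n - j) ∧
      th τ r n (n - j) =
        (1 / bk τ r j 0) * ∏ i ∈ Finset.Icc (j + 1) n, (r i) ^ 2 / (1 + 2 * r i) :=
  stmt4_general N τ r hτ hr1 hratio n j hj1 hjn hnN
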